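/- Let σ₁ : ℝ → ℝ and σ₂ : ℝ → ℝ be positive continuously differentiable functions, set σ(x,y) = σ₁(x)σ₂(y), and let u : ℝ² → ℝ be twice continuously differentiable and satisfy the two-dimensional electrical impedance equation ∇·(σ∇u) = 0, i.e. ∂_x(σ ∂_x u) + ∂_y(σ ∂_y u) = 0. Define W = √σ·∂_x u − i√σ·∂_y u and p = √(σ₂)/√(σ₁). Then W satisfies the Vekua equation ∂_z̄ W − ((∂_z̄ p)/p)·conj(W) = 0 at every point of ℝ². -/

import Mathlib

/-!
For any positive `C¹` conductivity `σ`, write `s = √σ`. Then `∂_z̄ W = -(∂_z s / s) · conj W`: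
the real part is the impedance equation divided by `s` (using `∇σ = 2 s ∇s`), and the imaginary
part is `s_y u_x - s_x u_y` because the mixed second derivatives of `u` cancel. For a separable
conductivity, `s = a(x) b(y)` with `a = √σ₁`, `b = √σ₂`, and `p = b / a` satisfies
`∂_z̄ p / p = -a'/a + i b'/b = -∂_z s / s`.
-/

/-- The operator `∂_z̄ = ∂_x + i·∂_y` (without the customary factor 1/2). -/
noncomputable def pdzbar (W : ℂ → ℂ) (z : ℂ) : ℂ :=
  fderiv ℝ W z 1 + Complex.I * fderiv ℝ W z Complex.I

/-- Partial derivative `∂_x` of a real-valued function on the plane `ℂ ≅ ℝ²`. -/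
noncomputable def px (f : ℂ → ℝ) (z : ℂ) : ℝ := fderiv ℝ f z 1

/-- Partial derivative `∂_y` of a real-valued function on the plane `ℂ ≅ ℝ²`. -/
noncomputable def py (f : ℂ → ℝ) (z : ℂ) : ℝ := fderiv ℝ f z Complex.I

open Complex ComplexConjugate

noncomputable def impedanceField (σ u : ℂ → ℝ) (z : ℂ) : ℂ :=
  ((√(σ z) * px u z : ℝ) : ℂ) - I * ((√(σ z) * py u z : ℝ) : ℂ)

section Partials

variable {f g : ℂ → ℝ} {z : ℂ}

theorem px_mul (hf : DifferentiableAt ℝ f z) (hg : DifferentiableAt ℝ g z) :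
    px (fun w => f w * g w) z = px f z * g z + f z * px g z := by
  simp only [px, fderiv_fun_mul hf hg, add_apply, smul_apply, smul_eq_mul]
  ring

theorem py_mul (hf : DifferentiableAt ℝ f z) (hg : DifferentiableAt ℝ g z) :
    py (fun w => f w * g w) z = py f z * g z + f z * py g z := by
  simp only [py, fderiv_fun_mul hf hg, add_apply, smul_apply, smul_eq_mul]
  ring

theorem px_sqrt (hf : DifferentiableAt ℝ f z) (hz : f z ≠ 0) :
    px (fun w => √(f w)) z = px f z / (2 * √(f z)) := by
  simp only [px, fderiv_sqrt hf hz, smul_apply, smul_eq_mul]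
  ring

theorem py_sqrt (hf : DifferentiableAt ℝ f z) (hz : f z ≠ 0) :
    py (fun w => √(f w)) z = py f z / (2 * √(f z)) := by
  simp only [py, fderiv_sqrt hf hz, smul_apply, smul_eq_mul]
  ring

theorem fderiv_ofReal_apply (hf : DifferentiableAt ℝ f z) (v : ℂ) :
    fderiv ℝ (fun w => (f w : ℂ)) z v = fderiv ℝ f z v := by
  have hf' : HasFDerivAt (fun w => (f w : ℂ)) (ofRealCLM.comp (fderiv ℝ f z)) z :=
    ofRealCLM.hasFDerivAt.comp z hf.hasFDerivAt
  rw [hf'.fderiv]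
  rfl

theorem pdzbar_ofReal (hf : DifferentiableAt ℝ f z) :
    pdzbar (fun w => (f w : ℂ)) z = px f z + I * py f z := by
  rw [pdzbar, fderiv_ofReal_apply hf, fderiv_ofReal_apply hf, px, py]

theorem pdzbar_ofReal_sub_I_mul (hf : DifferentiableAt ℝ f z) (hg : DifferentiableAt ℝ g z) :
    pdzbar (fun w => (f w : ℂ) - I * (g w : ℂ)) z =
      (px f z + py g z : ℝ) + I * (py f z - px g z : ℝ) := by
  have hf' : DifferentiableAt ℝ (fun w => (f w : ℂ)) z := ofRealCLM.differentiableAt.comp z hf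
  have hg' : DifferentiableAt ℝ (fun w => (g w : ℂ)) z := ofRealCLM.differentiableAt.comp z hg
  simp only [pdzbar, fderiv_fun_sub hf' (hg'.const_mul I), fderiv_const_mul hg', sub_apply,
    smul_apply, smul_eq_mul, fderiv_ofReal_apply hf, fderiv_ofReal_apply hg, px, py]
  push_cast
  linear_combination (-(fderiv ℝ g z I : ℂ)) * I_sq

end Partials

section SecondPartials

variable {u : ℂ → ℝ} {z : ℂ}

theorem fderiv_fderiv_apply (hu : ContDiffAt ℝ 2 u z) (v w : ℂ) :
    fderiv ℝ (fun x => fderiv ℝ u x v) z w = fderiv ℝ (fderiv ℝ u) z w v := by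
  have hdu : DifferentiableAt ℝ (fderiv ℝ u) z :=
    (hu.fderiv_right (m := 1) le_rfl).differentiableAt one_ne_zero
  rw [fderiv_clm_apply hdu (differentiableAt_const v)]
  simp

theorem differentiableAt_px (hu : ContDiffAt ℝ 2 u z) : DifferentiableAt ℝ (px u) z :=
  ((hu.fderiv_right (m := 1) le_rfl).differentiableAt one_ne_zero).clm_apply
    (differentiableAt_const _)

theorem differentiableAt_py (hu : ContDiffAt ℝ 2 u z) : DifferentiableAt ℝ (py u) z :=
  ((hu.fderiv_right (m := 1) le_rfl).differentiableAt one_ne_zero).clm_apply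
    (differentiableAt_const _)

theorem py_px_eq_px_py (hu : ContDiffAt ℝ 2 u z) : py (px u) z = px (py u) z := by
  change fderiv ℝ (fun x => fderiv ℝ u x 1) z I = fderiv ℝ (fun x => fderiv ℝ u x I) z 1
  rw [fderiv_fderiv_apply hu, fderiv_fderiv_apply hu]
  exact hu.isSymmSndFDerivAt (by simp) _ _

end SecondPartials

section Separable

variable {a b : ℝ → ℝ} {z : ℂ}

theorem hasFDerivAt_re_mul_im (ha : DifferentiableAt ℝ a z.re) (hb : DifferentiableAt ℝ b z.im) :
    HasFDerivAt (fun w : ℂ => a w.re * b w.im)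
      (a z.re • deriv b z.im • imCLM + b z.im • deriv a z.re • reCLM) z :=
  (ha.hasDerivAt.comp_hasFDerivAt z reCLM.hasFDerivAt).mul
    (hb.hasDerivAt.comp_hasFDerivAt z imCLM.hasFDerivAt)

theorem px_re_mul_im (ha : DifferentiableAt ℝ a z.re) (hb : DifferentiableAt ℝ b z.im) :
    px (fun w => a w.re * b w.im) z = deriv a z.re * b z.im := by
  simp [px, (hasFDerivAt_re_mul_im ha hb).fderiv, mul_comm]

theorem py_re_mul_im (ha : DifferentiableAt ℝ a z.re) (hb : DifferentiableAt ℝ b z.im) :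
    py (fun w => a w.re * b w.im) z = a z.re * deriv b z.im := by
  simp [py, (hasFDerivAt_re_mul_im ha hb).fderiv]

theorem pdzbar_im_div_re_div_self (ha : DifferentiableAt ℝ a z.re) (hb : DifferentiableAt ℝ b z.im)
    (ha₀ : a z.re ≠ 0) :
    pdzbar (fun w => ((b w.im / a w.re : ℝ) : ℂ)) z / ((b z.im / a z.re : ℝ) : ℂ) =
      -((px (fun w => a w.re * b w.im) z - I * py (fun w => a w.re * b w.im) z) /
        ((a z.re * b z.im : ℝ) : ℂ)) := by
  have ha' : DifferentiableAt ℝ (fun x => (a x)⁻¹) z.re := ha.inv ha₀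
  simp_rw [div_eq_inv_mul (b _)]
  rw [pdzbar_ofReal ((hasFDerivAt_re_mul_im ha' hb).differentiableAt), px_re_mul_im ha' hb,
    py_re_mul_im ha' hb, px_re_mul_im ha hb, py_re_mul_im ha hb, deriv_fun_inv'' ha ha₀]
  push_cast
  field_simp
  ring

end Separable

section Impedance

variable {σ u : ℂ → ℝ} {z : ℂ}

theorem div_sqrt_mul_grad_eq_of_impedance (hσ : DifferentiableAt ℝ σ z) (hσz : 0 < σ z)
    (hux : DifferentiableAt ℝ (px u) z) (huy : DifferentiableAt ℝ (py u) z)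
    (himp : px (fun w => σ w * px u w) z + py (fun w => σ w * py u w) z = 0) :
    px (fun w => √(σ w) * px u w) z + py (fun w => √(σ w) * py u w) z =
      -(px (fun w => √(σ w)) z * px u z + py (fun w => √(σ w)) z * py u z) := by
  have hs : DifferentiableAt ℝ (fun w => √(σ w)) z := hσ.sqrt hσz.ne'
  have hs₀ : √(σ z) ≠ 0 := (Real.sqrt_pos.2 hσz).ne'
  have hσx : px σ z = 2 * √(σ z) * px (fun w => √(σ w)) z := by
    rw [px_sqrt hσ hσz.ne']; field_simp
  have hσy : py σ z = 2 * √(σ z) * py (fun w => √(σ w)) z := by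
    rw [py_sqrt hσ hσz.ne']; field_simp
  rw [px_mul hσ hux, py_mul hσ huy, hσx, hσy] at himp
  rw [px_mul hs hux, py_mul hs huy]
  apply mul_left_cancel₀ hs₀
  linear_combination himp + (px (px u) z + py (py u) z) * Real.mul_self_sqrt hσz.le

theorem pdzbar_impedanceField (hσ : DifferentiableAt ℝ σ z) (hσz : 0 < σ z)
    (hu : ContDiffAt ℝ 2 u z)
    (himp : px (fun w => σ w * px u w) z + py (fun w => σ w * py u w) z = 0) :
    pdzbar (impedanceField σ u) z =
      -((px (fun w => √(σ w)) z - I * py (fun w => √(σ w)) z) / √(σ z)) *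
        conj (impedanceField σ u z) := by
  have hs : DifferentiableAt ℝ (fun w => √(σ w)) z := hσ.sqrt hσz.ne'
  have hux := differentiableAt_px hu
  have huy := differentiableAt_py hu
  have hs₀ : (√(σ z) : ℂ) ≠ 0 := ofReal_ne_zero.2 (Real.sqrt_pos.2 hσz).ne'
  have hf : DifferentiableAt ℝ (fun w => √(σ w) * px u w) z := hs.mul hux
  have hg : DifferentiableAt ℝ (fun w => √(σ w) * py u w) z := hs.mul huy
  change pdzbar (fun w => ((√(σ w) * px u w : ℝ) : ℂ) - I * ((√(σ w) * py u w : ℝ) : ℂ)) z = _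
  rw [impedanceField, pdzbar_ofReal_sub_I_mul hf hg,
    div_sqrt_mul_grad_eq_of_impedance hσ hσz hux huy himp, py_mul hs hux, px_mul hs huy,
    py_px_eq_px_py hu]
  simp only [map_sub, map_mul, conj_ofReal, conj_I]
  push_cast
  field_simp
  linear_combination (-(py (fun w => √(σ w)) z * py u z : ℂ)) * I_sq

end Impedance

/-- If `σ(x,y) = σ₁(x)σ₂(y)` is a positive separable-variables conductivity and
`u` is a `C²` solution of the electrical impedance equation `∂_x(σ ∂_x u) + ∂_y(σ ∂_y u) = 0`,
then `W = √σ·∂_x u − i√σ·∂_y u` satisfies the Vekua equation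
`∂_z̄ W − ((∂_z̄ p)/p)·conj W = 0`, where `p = √σ₂/√σ₁`. -/
theorem impedance_to_Vekua (σ₁ σ₂ : ℝ → ℝ)
    (h₁ : ContDiff ℝ 1 σ₁) (h₂ : ContDiff ℝ 1 σ₂)
    (hσ₁ : ∀ x, 0 < σ₁ x) (hσ₂ : ∀ y, 0 < σ₂ y)
    (σ : ℂ → ℝ) (hσ : σ = fun z => σ₁ z.re * σ₂ z.im)
    (u : ℂ → ℝ) (hu : ContDiff ℝ 2 u)
    (himp : ∀ z : ℂ, px (fun w => σ w * px u w) z + py (fun w => σ w * py u w) z = 0)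
    (W : ℂ → ℂ)
    (hW : W = fun z => ((Real.sqrt (σ z) * px u z : ℝ) : ℂ)
      - Complex.I * ((Real.sqrt (σ z) * py u z : ℝ) : ℂ))
    (p : ℂ → ℝ) (hp : p = fun z => Real.sqrt (σ₂ z.im) / Real.sqrt (σ₁ z.re)) :
    ∀ z : ℂ,
      pdzbar W z
        - (pdzbar (fun w => ((p w : ℝ) : ℂ)) z / ((p z : ℝ) : ℂ)) * (starRingEnd ℂ) (W z)
      = 0 := by
  intro z
  have hd₁ : Differentiable ℝ σ₁ := h₁.differentiable one_ne_zero
  have hd₂ : Differentiable ℝ σ₂ := h₂.differentiable one_ne_zero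
  have hσd : DifferentiableAt ℝ σ z :=
    hσ ▸ (hasFDerivAt_re_mul_im (hd₁ z.re) (hd₂ z.im)).differentiableAt
  have hσz : 0 < σ z := hσ ▸ mul_pos (hσ₁ z.re) (hσ₂ z.im)
  have hsqrt : (fun w => √(σ w)) = fun w => √(σ₁ w.re) * √(σ₂ w.im) := by
    funext w
    rw [hσ, Real.sqrt_mul (hσ₁ w.re).le]
  have hlog := pdzbar_im_div_re_div_self (z := z) ((hd₁ z.re).sqrt (hσ₁ z.re).ne')
    ((hd₂ z.im).sqrt (hσ₂ z.im).ne') (Real.sqrt_pos.2 (hσ₁ z.re)).ne'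
  rw [← hsqrt, ← congrFun hsqrt z] at hlog
  have hW' : W = impedanceField σ u := hW
  rw [hW', hp, hlog, pdzbar_impedanceField hσd hσz hu.contDiffAt (himp z)]
  ring
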